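/- arXiv:1111.1440 — 2 statements merged into one kernel-verified Lean document; each statement's English description precedes it below -/
import Mathlib

section
/- Let V : ℝⁿ × [0,T] → ℝ, B : ℝⁿ × [0,T] → ℝ, and define M V(x,t) = inf_ξ (V(x+ξ,t) + B(ξ,t)). Suppose B satisfies the K-subadditivity condition: B(ξ+η, t) + K ≤ B(ξ,t) + B(η,t) for all ξ, η and some constant K > 0. Fix (x,t) and ε > 0, and suppose ξ satisfies V(x+ξ,t) + B(ξ,t) < M V(x,t) + ε. Then V(x+ξ,t) + K - ε < M V(x+ξ,t). -/
/-- The impulse intervention operator `M V(x,t) = inf_ξ (V(x+ξ,t) + B(ξ,t))`. -/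
noncomputable def MV {n : ℕ} (V B : EuclideanSpace ℝ (Fin n) → ℝ → ℝ)
    (x : EuclideanSpace ℝ (Fin n)) (t : ℝ) : ℝ :=
  ⨅ ξ : EuclideanSpace ℝ (Fin n), (V (x + ξ) t + B ξ t)

/-- After an ε-optimal impulse ξ from x, the post-impulse state x+ξ lies inside the
continuation region with margin K - ε, by K-subadditivity of the impulse cost B. -/
theorem stmt2 {n : ℕ} (V B : EuclideanSpace ℝ (Fin n) → ℝ → ℝ) (t : ℝ)
    (K ε : ℝ) (hK : 0 < K) (hε : 0 < ε)
    (hbdd : ∀ y : EuclideanSpace ℝ (Fin n),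
      BddBelow (Set.range fun ξ => V (y + ξ) t + B ξ t))
    (hsub : ∀ ξ η : EuclideanSpace ℝ (Fin n), B (ξ + η) t + K ≤ B ξ t + B η t)
    (x ξ : EuclideanSpace ℝ (Fin n))
    (hξ : V (x + ξ) t + B ξ t < MV V B x t + ε) :
    V (x + ξ) t + K - ε < MV V B (x + ξ) t := by
  have key : MV V B x t + K - B ξ t ≤ MV V B (x + ξ) t := by
    apply le_ciInf
    intro η
    have h1 : MV V B x t ≤ V (x + (ξ + η)) t + B (ξ + η) t :=
      ciInf_le (hbdd x) (ξ + η)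
    have h2 := hsub ξ η
    have h3 : x + (ξ + η) = x + ξ + η := (add_assoc x ξ η).symm
    rw [h3] at h1
    linarith
  have : V (x + ξ) t + K - ε < MV V B x t + K - B ξ t := by linarith
  linarith
end

section
/- Let β_ε : ℝ → ℝ be smooth with β_ε ≥ -1, β_ε(0) = 0, β_ε' > 0, β_ε'' ≥ 0. Let Q_T be a bounded cylinder and u, Ψ : closure(Q_T) → ℝ with u ∈ C^{2,1}. Suppose u solves u_t + Lu + β_ε(u - Ψ) = 0 in Q_T with u = 0 on the parabolic boundary ∂_P Q_T, where L u = -tr(A D²u) - b·Du + ru with A(x,t) positive semidefinite and r ≥ 0, and Ψ ≥ 0 on ∂_P Q_T. Assume Ψ is smooth with Ψ_t + LΨ ≥ -C₀ in Q_T for a constant C₀ ≥ 0. Then β_ε(u - Ψ) ≤ max(C₀, 0) on Q_T, with the bound independent of ε. -/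
open scoped BigOperators

/-- The parabolic operator `L u = -tr(A D²u) - b·Du + r u` (spatial part), written with
partial derivatives in the coordinate directions of `ℝⁿ`. -/
noncomputable def Lop {n : ℕ}
    (A : EuclideanSpace ℝ (Fin n) → ℝ → Matrix (Fin n) (Fin n) ℝ)
    (b : EuclideanSpace ℝ (Fin n) → ℝ → Fin n → ℝ) (r : ℝ)
    (u : EuclideanSpace ℝ (Fin n) → ℝ → ℝ) (x : EuclideanSpace ℝ (Fin n)) (t : ℝ) : ℝ :=
  -(∑ i, ∑ j, A x t i j *
      fderiv ℝ (fun y => fderiv ℝ (fun w => u w t) y (EuclideanSpace.single j 1)) x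
        (EuclideanSpace.single i 1))
  - (∑ i, b x t i * fderiv ℝ (fun y => u y t) x (EuclideanSpace.single i 1))
  + r * u x t

/-- The cylinder `Q_T = B(0,R) × (t₁, T]`. -/
def cyl {n : ℕ} (R t₁ T : ℝ) : Set (EuclideanSpace ℝ (Fin n) × ℝ) :=
  Metric.ball (0 : EuclideanSpace ℝ (Fin n)) R ×ˢ Set.Ioc t₁ T

/-- The parabolic boundary of the cylinder `B(0,R) × (t₁, T]`. -/
def pbd {n : ℕ} (R t₁ T : ℝ) : Set (EuclideanSpace ℝ (Fin n) × ℝ) :=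
  (Metric.closedBall (0 : EuclideanSpace ℝ (Fin n)) R ×ˢ ({t₁} : Set ℝ)) ∪
    (Metric.sphere (0 : EuclideanSpace ℝ (Fin n)) R ×ˢ Set.Icc t₁ T)


section AuxLemmas
open Matrix

lemma psd_trace_sum {n : ℕ} {A M : Matrix (Fin n) (Fin n) ℝ} (hA : A.PosSemidef)
    (hM : M.PosSemidef) : 0 ≤ ∑ i, ∑ j, A i j * M i j := by
  obtain ⟨B, rfl⟩ := (by open scoped MatrixOrder in exact CStarAlgebra.nonneg_iff_eq_star_mul_self.mp hA.nonneg : ∃ B : Matrix (Fin n) (Fin n) ℝ, A = Bᴴ * B)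
  have hMs : ∀ i j, M j i = M i j := by
    intro i j
    have := congrFun (congrFun hM.1 i) j
    simpa [Matrix.conjTranspose_apply] using this
  have h1 : ∀ i j : Fin n, (Bᴴ * B) i j * M i j = ∑ k, B k i * M i j * B k j := by
    intro i j
    simp only [Matrix.mul_apply, Matrix.conjTranspose_apply, Finset.sum_mul, RCLike.star_def]
    exact Finset.sum_congr rfl fun k _ => by simp; ring
  have h2 : ∀ k : Fin n, (star (fun j => B k j)) ⬝ᵥ (M *ᵥ (fun j => B k j))
      = ∑ i, ∑ j, B k i * M i j * B k j := by
    intro k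
    simp only [dotProduct, Matrix.mulVec, Finset.mul_sum, Pi.star_apply, RCLike.star_def]
    rw [Finset.sum_comm]
    refine Finset.sum_congr rfl fun i _ => Finset.sum_congr rfl fun j _ => ?_
    simp only [starRingEnd_apply, star_trivial]
    rw [hMs i j]; ring
  have key : ∑ i, ∑ j, (Bᴴ * B) i j * M i j
      = ∑ k, (star (fun j => B k j)) ⬝ᵥ (M *ᵥ (fun j => B k j)) := by
    simp only [h1, h2]
    rw [show (∑ i, ∑ j, ∑ k, B k i * M i j * B k j : ℝ)
        = ∑ i, ∑ k, ∑ j, B k i * M i j * B k j from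
      Finset.sum_congr rfl fun i _ => Finset.sum_comm, Finset.sum_comm]
  rw [key]
  exact Finset.sum_nonneg fun k _ => hM.dotProduct_mulVec_nonneg _

lemma deriv2_nonpos_of_isLocalMax {φ : ℝ → ℝ} {a : ℝ} (hφ : ContDiffAt ℝ 2 φ a)
    (hmax : IsLocalMax φ a) : deriv (deriv φ) a ≤ 0 := by
  by_contra hpos
  push_neg at hpos
  have hd1 : deriv φ a = 0 := hmax.deriv_eq_zero
  have hdiff' : ContDiffAt ℝ 1 (fderiv ℝ φ) a := hφ.fderiv_right (by norm_num)
  have hder2 : DifferentiableAt ℝ (deriv φ) a := by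
    have : DifferentiableAt ℝ (fderiv ℝ φ) a := hdiff'.differentiableAt one_ne_zero
    have h2 : DifferentiableAt ℝ (fun x => fderiv ℝ φ x 1) a :=
      (ContinuousLinearMap.apply ℝ ℝ (1:ℝ)).differentiableAt.comp a this
    exact h2
  -- eventually differentiable near a
  have hev : ∀ᶠ y in nhds a, ContDiffAt ℝ 2 φ y := hφ.eventually (by simp)
  have hevd : ∀ᶠ y in nhds a, DifferentiableAt ℝ φ y :=
    hev.mono fun y hy => hy.differentiableAt two_ne_zero
  -- slope of deriv φ tends to second derivative, positive
  have hslope : Filter.Tendsto (fun s => (deriv φ s - deriv φ a) / (s - a))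
      (nhdsWithin a {a}ᶜ) (nhds (deriv (deriv φ) a)) := by
    have := hder2.hasDerivAt
    rw [hasDerivAt_iff_tendsto_slope] at this
    simpa [slope_fun_def_field, div_eq_inv_mul] using this
  have hev2 : ∀ᶠ s in nhdsWithin a (Set.Ioi a), 0 < deriv φ s := by
    have h1 : ∀ᶠ s in nhdsWithin a {a}ᶜ, 0 < (deriv φ s - deriv φ a) / (s - a) :=
      hslope.eventually (eventually_gt_nhds hpos)
    have h2 : nhdsWithin a (Set.Ioi a) ≤ nhdsWithin a {a}ᶜ :=
      nhdsWithin_mono a (fun s hs => ne_of_gt hs)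
    filter_upwards [h2 h1, self_mem_nhdsWithin] with s hs hs'
    rw [hd1, sub_zero] at hs
    have hsa : 0 < s - a := sub_pos.mpr hs'
    have := mul_pos hs hsa
    rw [div_mul_cancel₀] at this
    · exact this
    · exact ne_of_gt hsa
  have hev3 : ∀ᶠ s in nhdsWithin a (Set.Ioi a),
      0 < deriv φ s ∧ DifferentiableAt ℝ φ s ∧ φ s ≤ φ a := by
    filter_upwards [hev2, (hevd.and hmax).filter_mono nhdsWithin_le_nhds] with s h1 h2
    exact ⟨h1, h2.1, h2.2⟩
  rw [eventually_nhdsWithin_iff] at hev3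
  rcases Metric.eventually_nhds_iff.mp hev3 with ⟨δ, hδ, hball⟩
  set b := a + δ / 2 with hb
  have hab : a < b := by simp [hb]; linarith
  have hprop : ∀ s, a < s → s ≤ b →
      0 < deriv φ s ∧ DifferentiableAt ℝ φ s ∧ φ s ≤ φ a := by
    intro s h1 h2
    refine hball ?_ h1
    rw [Real.dist_eq, abs_lt]
    rw [hb] at h2
    constructor <;> linarith
  have hcont : ContinuousOn φ (Set.Icc a b) := by
    intro s hs
    rcases eq_or_lt_of_le hs.1 with h | h
    · exact (h ▸ hφ.continuousAt).continuousWithinAt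
    · exact ((hprop s h hs.2).2.1.continuousAt).continuousWithinAt
  have hmono : StrictMonoOn φ (Set.Icc a b) := by
    apply strictMonoOn_of_deriv_pos (convex_Icc a b) hcont
    intro s hs
    rw [interior_Icc] at hs
    exact (hprop s hs.1 (le_of_lt hs.2)).1
  have h1 : φ a < φ b := hmono (Set.left_mem_Icc.mpr hab.le) (Set.right_mem_Icc.mpr hab.le) hab
  have h2 : φ b ≤ φ a := (hprop b hab le_rfl).2.2
  linarith

lemma snd_dir_nonpos {E : Type*} [NormedAddCommGroup E] [NormedSpace ℝ E] {f : E → ℝ} {x₀ : E}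
    (hf : ContDiffAt ℝ 2 f x₀) (hmax : IsLocalMax f x₀) (c : E) :
    fderiv ℝ (fderiv ℝ f) x₀ c c ≤ 0 := by
  set L : ℝ → E := fun s => x₀ + s • c with hLdef
  have hL0 : L 0 = x₀ := by simp [hLdef]
  have hLsm : ContDiff ℝ 2 L := contDiff_const.add (contDiff_id.smul contDiff_const)
  have hLd : ∀ s : ℝ, HasDerivAt L c s := by
    intro s
    have := ((hasDerivAt_id s).smul_const c).const_add x₀
    simpa [hLdef] using this
  have hLc : Filter.Tendsto L (nhds 0) (nhds x₀) := by
    rw [← hL0]; exact hLsm.continuous.tendsto 0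
  set φ : ℝ → ℝ := fun s => f (L s) with hφdef
  have hφ : ContDiffAt ℝ 2 φ 0 := (hL0 ▸ hf).comp 0 hLsm.contDiffAt
  have hφmax : IsLocalMax φ 0 := by
    filter_upwards [hLc.eventually hmax] with s hs
    simpa [hφdef, hL0] using hs
  have hfd : ∀ᶠ y in nhds x₀, DifferentiableAt ℝ f y :=
    (hf.eventually (by simp)).mono fun y hy => hy.differentiableAt two_ne_zero
  have hfderiv : DifferentiableAt ℝ (fderiv ℝ f) x₀ :=
    (hf.fderiv_right (m := 1) (by norm_num)).differentiableAt one_ne_zero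
  set g : E → ℝ := fun y => fderiv ℝ f y c with hgdef
  have hg : HasFDerivAt g ((ContinuousLinearMap.apply ℝ ℝ c).comp
      (fderiv ℝ (fderiv ℝ f) x₀)) x₀ :=
    (ContinuousLinearMap.apply ℝ ℝ c).hasFDerivAt.comp x₀ hfderiv.hasFDerivAt
  have hφ' : ∀ᶠ s in nhds 0, deriv φ s = g (L s) := by
    filter_upwards [hLc.eventually hfd] with s hs
    exact ((hs.hasFDerivAt).comp_hasDerivAt s (hLd s)).deriv
  have hgL : HasDerivAt (fun s => g (L s)) (fderiv ℝ (fderiv ℝ f) x₀ c c) 0 := by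
    have := (show HasFDerivAt g ((ContinuousLinearMap.apply ℝ ℝ c).comp
        (fderiv ℝ (fderiv ℝ f) x₀)) (L 0) from hL0.symm ▸ hg).comp_hasDerivAt 0 (hLd 0)
    exact this
  have key : deriv (deriv φ) 0 = fderiv ℝ (fderiv ℝ f) x₀ c c := by
    rw [Filter.EventuallyEq.deriv_eq hφ']
    exact hgL.deriv
  rw [← key]
  exact deriv2_nonpos_of_isLocalMax hφ hφmax

lemma time_deriv_nonneg {g : ℝ → ℝ} {t₁ T t₀ : ℝ} (hg : DifferentiableAt ℝ g t₀)
    (ht : t₀ ∈ Set.Ioc t₁ T) (hmax : ∀ t ∈ Set.Icc t₁ T, g t ≤ g t₀) : 0 ≤ deriv g t₀ := by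
  have hseg : segment ℝ t₀ t₁ ⊆ Set.Icc t₁ T := by
    rw [segment_symm, segment_eq_Icc ht.1.le]
    exact Set.Icc_subset_Icc le_rfl ht.2
  have hmem : t₁ - t₀ ∈ posTangentConeAt (Set.Icc t₁ T) t₀ := by
    apply sub_mem_posTangentConeAt_of_segment_subset hseg
  have hlocmax : IsLocalMaxOn g (Set.Icc t₁ T) t₀ := by
    exact Filter.eventually_inf_principal.mpr (Filter.Eventually.of_forall hmax)
  have h := hlocmax.hasFDerivWithinAt_nonpos hg.hasFDerivAt.hasFDerivWithinAt hmem
  have h2 : deriv g t₀ * (t₁ - t₀) ≤ 0 := by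
    have : fderiv ℝ g t₀ (t₁ - t₀) = (t₁ - t₀) * deriv g t₀ := by
      rw [← toSpanSingleton_deriv]
      simp
    rw [this] at h
    linarith
  nlinarith [ht.1]

lemma hess_sum_nonpos {n : ℕ} {f : EuclideanSpace ℝ (Fin n) → ℝ}
    {x₀ : EuclideanSpace ℝ (Fin n)} {A : Matrix (Fin n) (Fin n) ℝ} (hA : A.PosSemidef)
    (hf : ContDiffAt ℝ 2 f x₀) (hmax : IsLocalMax f x₀) :
    ∑ i, ∑ j, A i j * fderiv ℝ (fun y => fderiv ℝ f y (EuclideanSpace.single j 1)) x₀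
      (EuclideanSpace.single i 1) ≤ 0 := by
  set B := fderiv ℝ (fderiv ℝ f) x₀ with hB
  have hfderiv : DifferentiableAt ℝ (fderiv ℝ f) x₀ :=
    (hf.fderiv_right (m := 1) (by norm_num)).differentiableAt one_ne_zero
  have hentry : ∀ (w v : EuclideanSpace ℝ (Fin n)),
      fderiv ℝ (fun y => fderiv ℝ f y w) x₀ v = B v w := by
    intro w v
    have h : HasFDerivAt (fun y => fderiv ℝ f y w)
        ((ContinuousLinearMap.apply ℝ ℝ w).comp B) x₀ :=
      (ContinuousLinearMap.apply ℝ ℝ w).hasFDerivAt.comp x₀ hfderiv.hasFDerivAt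
    rw [h.fderiv]; rfl
  have hsym : ∀ v w : EuclideanSpace ℝ (Fin n), B v w = B w v := hf.isSymmSndFDerivAt (by simp)
  have hquad : ∀ c : EuclideanSpace ℝ (Fin n), B c c ≤ 0 := snd_dir_nonpos hf hmax
  set e : Fin n → EuclideanSpace ℝ (Fin n) := fun i => EuclideanSpace.single i 1 with he
  set Mneg : Matrix (Fin n) (Fin n) ℝ := fun i j => -(B (e i) (e j)) with hM
  have hexp : ∀ w : Fin n → ℝ, B (∑ i, w i • e i) (∑ j, w j • e j)
      = ∑ i, ∑ j, w i * w j * B (e i) (e j) := by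
    intro w
    simp only [map_sum, _root_.map_smul, ContinuousLinearMap.sum_apply, ContinuousLinearMap.smul_apply,
      ContinuousLinearMap.coe_sum', Finset.sum_apply, ContinuousLinearMap.coe_smul',
      Pi.smul_apply, smul_eq_mul, Finset.mul_sum, Finset.sum_mul]
    rw [Finset.sum_comm]
    exact Finset.sum_congr rfl fun i _ => Finset.sum_congr rfl fun j _ => by ring
  have hMpsd : Mneg.PosSemidef := by
    refine Matrix.PosSemidef.of_dotProduct_mulVec_nonneg ?_ ?_
    · ext i j
      simp only [hM, Matrix.conjTranspose_apply, star_trivial, neg_inj]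
      exact congrArg Neg.neg (hsym (e j) (e i))
    · intro w
      have h1 : star w ⬝ᵥ Mneg *ᵥ w = -(∑ i, ∑ j, w i * w j * B (e i) (e j)) := by
        calc star w ⬝ᵥ Mneg *ᵥ w = ∑ i, ∑ j, -(w i * w j * B (e i) (e j)) := by
              simp only [dotProduct, Matrix.mulVec, Pi.star_apply, star_trivial, Finset.mul_sum]
              refine Finset.sum_congr rfl fun i _ => Finset.sum_congr rfl fun j _ => ?_
              simp only [hM]; ring
          _ = -(∑ i, ∑ j, w i * w j * B (e i) (e j)) := by
              simp [← Finset.sum_neg_distrib]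
      rw [h1, ← hexp w]
      exact neg_nonneg.mpr (hquad _)
  have hfin : ∑ i, ∑ j, A i j * fderiv ℝ (fun y => fderiv ℝ f y (e j)) x₀ (e i)
      = -(∑ i, ∑ j, A i j * Mneg i j) := by
    simp only [hentry, hM, mul_neg, ← Finset.sum_neg_distrib, neg_neg]
  have := psd_trace_sum hA hMpsd
  calc ∑ i, ∑ j, A i j * fderiv ℝ (fun y => fderiv ℝ f y (EuclideanSpace.single j 1)) x₀
        (EuclideanSpace.single i 1)
      = ∑ i, ∑ j, A i j * fderiv ℝ (fun y => fderiv ℝ f y (e j)) x₀ (e i) := rfl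
    _ = -(∑ i, ∑ j, A i j * Mneg i j) := hfin
    _ ≤ 0 := by linarith

end AuxLemmas

set_option maxHeartbeats 1000000

/-- Uniform penalty bound `β_ε(u - Ψ) ≤ max(C₀,0)` for the penalized obstacle problem,
by the maximum principle; the bound is independent of `ε`. -/
theorem stmt8 {n : ℕ} (R t₁ T C₀ : ℝ) (hC₀ : 0 ≤ C₀)
    (A : EuclideanSpace ℝ (Fin n) → ℝ → Matrix (Fin n) (Fin n) ℝ)
    (b : EuclideanSpace ℝ (Fin n) → ℝ → Fin n → ℝ) (r : ℝ) (hr : 0 ≤ r)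
    (hA : ∀ x t, (A x t).PosSemidef)
    (βe : ℝ → ℝ) (hβsmooth : ContDiff ℝ (⊤ : ℕ∞) βe) (hβlb : ∀ x, -1 ≤ βe x) (hβ0 : βe 0 = 0)
    (hβ' : ∀ x, 0 < deriv βe x) (hβ'' : ∀ x, 0 ≤ deriv (deriv βe) x)
    (u Ψ : EuclideanSpace ℝ (Fin n) → ℝ → ℝ)
    (hu : ContinuousOn (fun p : EuclideanSpace ℝ (Fin n) × ℝ => u p.1 p.2)
      (closure (cyl R t₁ T)))
    (hux : ∀ x t, (x, t) ∈ cyl R t₁ T → ContDiffAt ℝ 2 (fun y => u y t) x)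
    (hut : ∀ x t, (x, t) ∈ cyl R t₁ T → DifferentiableAt ℝ (u x) t)
    (hΨ : ContDiff ℝ (⊤ : ℕ∞) (fun p : EuclideanSpace ℝ (Fin n) × ℝ => Ψ p.1 p.2))
    (hΨpde : ∀ x t, (x, t) ∈ cyl R t₁ T → -C₀ ≤ deriv (Ψ x) t + Lop A b r Ψ x t)
    (hpde : ∀ x t, (x, t) ∈ cyl R t₁ T →
      deriv (u x) t + Lop A b r u x t + βe (u x t - Ψ x t) = 0)
    (hbdry : ∀ x t, (x, t) ∈ pbd R t₁ T → u x t = 0)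
    (hΨbdry : ∀ x t, (x, t) ∈ pbd R t₁ T → 0 ≤ Ψ x t) :
    ∀ x t, (x, t) ∈ cyl R t₁ T → βe (u x t - Ψ x t) ≤ max C₀ 0 := by
  intro x t hxt
  have hxball : x ∈ Metric.ball (0 : EuclideanSpace ℝ (Fin n)) R := hxt.1
  have htIoc : t ∈ Set.Ioc t₁ T := hxt.2
  have hR : 0 < R := lt_of_le_of_lt dist_nonneg (Metric.mem_ball.mp hxball)
  have htT : t₁ < T := lt_of_lt_of_le htIoc.1 htIoc.2
  have hclos : closure (cyl R t₁ T : Set (EuclideanSpace ℝ (Fin n) × ℝ))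
      = Metric.closedBall 0 R ×ˢ Set.Icc t₁ T := by
    rw [cyl, closure_prod_eq, closure_ball 0 (ne_of_gt hR), closure_Ioc (ne_of_lt htT)]
  set K := (Metric.closedBall (0 : EuclideanSpace ℝ (Fin n)) R ×ˢ Set.Icc t₁ T) with hKdef
  have hKc : IsCompact K := (isCompact_closedBall _ _).prod isCompact_Icc
  set v : EuclideanSpace ℝ (Fin n) × ℝ → ℝ := fun p => u p.1 p.2 - Ψ p.1 p.2 with hv
  have hvc : ContinuousOn v K := by
    rw [← hclos]; exact hu.sub hΨ.continuous.continuousOn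
  have hsub : cyl R t₁ T ⊆ K := hclos ▸ subset_closure
  have hne : K.Nonempty := ⟨(x, t), hsub hxt⟩
  obtain ⟨p₀, hp₀K, hp₀max⟩ := hKc.exists_isMaxOn hne hvc
  obtain ⟨x₀, t₀⟩ := p₀
  have hβmono : Monotone βe := (strictMono_of_deriv_pos hβ').monotone
  have hvle : v (x, t) ≤ v (x₀, t₀) := hp₀max (hsub hxt)
  have hkey : βe (v (x₀, t₀)) ≤ max C₀ 0 := by
    rcases le_or_gt (v (x₀, t₀)) 0 with hM | hM
    · calc βe (v (x₀, t₀)) ≤ βe 0 := hβmono hM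
        _ = 0 := hβ0
        _ ≤ max C₀ 0 := le_max_right _ _
    · -- the max point is interior
      have hp₀cyl : (x₀, t₀) ∈ cyl R t₁ T := by
        by_contra hcon
        have hb : (x₀, t₀) ∈ pbd R t₁ T := by
          obtain ⟨h1, h2⟩ := hp₀K
          rcases eq_or_lt_of_le h2.1 with heq | hlt
          · exact Or.inl ⟨h1, heq.symm⟩
          · have hxb : x₀ ∉ Metric.ball (0 : EuclideanSpace ℝ (Fin n)) R :=
              fun hball => hcon ⟨hball, ⟨hlt, h2.2⟩⟩
            have hsph : dist x₀ 0 = R :=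
              le_antisymm (Metric.mem_closedBall.mp h1) (not_lt.mp fun hc => hxb hc)
            exact Or.inr ⟨hsph, h2⟩
        have h1 := hbdry x₀ t₀ hb
        have h2 := hΨbdry x₀ t₀ hb
        have : v (x₀, t₀) ≤ 0 := by simp only [hv]; simp only [h1]; linarith
        linarith
      obtain ⟨hx₀, ht₀⟩ := hp₀cyl
      -- section in space
      have hΨf : ContDiff ℝ 2 (fun y => Ψ y t₀) :=
        (hΨ.comp (contDiff_id.prodMk contDiff_const)).of_le (WithTop.coe_le_coe.mpr (le_top : (2:ℕ∞) ≤ ⊤))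
      have hufC : ContDiffAt ℝ 2 (fun y => u y t₀) x₀ := hux x₀ t₀ ⟨hx₀, ht₀⟩
      have hvfC : ContDiffAt ℝ 2 (fun y => u y t₀ - Ψ y t₀) x₀ := hufC.sub hΨf.contDiffAt
      have hloc : IsLocalMax (fun y => u y t₀ - Ψ y t₀) x₀ := by
        filter_upwards [Metric.isOpen_ball.mem_nhds hx₀] with y hy
        exact hp₀max (hsub (show (y, t₀) ∈ cyl R t₁ T from ⟨hy, ht₀⟩))
      -- first derivatives agree
      have hufd : DifferentiableAt ℝ (fun y => u y t₀) x₀ := hufC.differentiableAt two_ne_zero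
      have hΨfd : DifferentiableAt ℝ (fun y => Ψ y t₀) x₀ :=
        (hΨf.differentiable two_ne_zero) x₀
      have hgrad : fderiv ℝ (fun y => u y t₀ - Ψ y t₀) x₀ = 0 := hloc.fderiv_eq_zero
      have hsub1 : fderiv ℝ (fun y => u y t₀) x₀ = fderiv ℝ (fun y => Ψ y t₀) x₀ := by
        have h := fderiv_fun_sub hufd hΨfd
        rw [hgrad] at h
        exact sub_eq_zero.mp h.symm
      -- second-order inequality
      have hHess : ∑ i, ∑ j, A x₀ t₀ i j *
          fderiv ℝ (fun y => fderiv ℝ (fun w => u w t₀ - Ψ w t₀) y (EuclideanSpace.single j 1))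
            x₀ (EuclideanSpace.single i 1) ≤ 0 :=
        hess_sum_nonpos (hA x₀ t₀) hvfC hloc
      have hEvent : ∀ᶠ y in nhds x₀, fderiv ℝ (fun w => u w t₀ - Ψ w t₀) y
          = fderiv ℝ (fun w => u w t₀) y - fderiv ℝ (fun w => Ψ w t₀) y := by
        filter_upwards [Metric.isOpen_ball.mem_nhds hx₀] with y hy
        exact fderiv_sub ((hux y t₀ ⟨hy, ht₀⟩).differentiableAt two_ne_zero)
          (hΨf.differentiable two_ne_zero y)
      have hdu : DifferentiableAt ℝ (fun y => fderiv ℝ (fun w => u w t₀) y) x₀ :=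
        (hufC.fderiv_right (m := 1) (by norm_num)).differentiableAt one_ne_zero
      have hdΨ : DifferentiableAt ℝ (fun y => fderiv ℝ (fun w => Ψ w t₀) y) x₀ :=
        ((hΨf.contDiffAt.fderiv_right (m := 1) (by norm_num)).differentiableAt one_ne_zero : _)
      have hsecond : ∀ j i : Fin n,
          fderiv ℝ (fun y => fderiv ℝ (fun w => u w t₀ - Ψ w t₀) y (EuclideanSpace.single j 1))
            x₀ (EuclideanSpace.single i 1)
          = fderiv ℝ (fun y => fderiv ℝ (fun w => u w t₀) y (EuclideanSpace.single j 1)) x₀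
              (EuclideanSpace.single i 1)
            - fderiv ℝ (fun y => fderiv ℝ (fun w => Ψ w t₀) y (EuclideanSpace.single j 1)) x₀
              (EuclideanSpace.single i 1) := by
        intro j i
        have h1 : (fun y => fderiv ℝ (fun w => u w t₀ - Ψ w t₀) y (EuclideanSpace.single j 1))
            =ᶠ[nhds x₀] fun y => fderiv ℝ (fun w => u w t₀) y (EuclideanSpace.single j 1)
              - fderiv ℝ (fun w => Ψ w t₀) y (EuclideanSpace.single j 1) := by
          filter_upwards [hEvent] with y hy
          rw [hy]; rfl
        rw [h1.fderiv_eq]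
        have hdu' : DifferentiableAt ℝ
            (fun y => fderiv ℝ (fun w => u w t₀) y (EuclideanSpace.single j 1)) x₀ :=
          hdu.clm_apply (differentiableAt_const _)
        have hdΨ' : DifferentiableAt ℝ
            (fun y => fderiv ℝ (fun w => Ψ w t₀) y (EuclideanSpace.single j 1)) x₀ :=
          hdΨ.clm_apply (differentiableAt_const _)
        rw [fderiv_fun_sub hdu' hdΨ']
        rfl
      -- time derivative
      have hΨt : ∀ s : ℝ, DifferentiableAt ℝ (Ψ x₀) s := by
        intro s
        exact ((hΨ.comp (contDiff_const.prodMk contDiff_id)).differentiable (by simp)) s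
      have hgd : DifferentiableAt ℝ (fun s => u x₀ s - Ψ x₀ s) t₀ :=
        (hut x₀ t₀ ⟨hx₀, ht₀⟩).sub (hΨt t₀)
      have hgmax : ∀ s ∈ Set.Icc t₁ T, (fun s => u x₀ s - Ψ x₀ s) s
          ≤ (fun s => u x₀ s - Ψ x₀ s) t₀ := by
        intro s hs
        exact hp₀max (show (x₀, s) ∈ K from ⟨Metric.ball_subset_closedBall hx₀, hs⟩)
      have htd : 0 ≤ deriv (fun s => u x₀ s - Ψ x₀ s) t₀ := time_deriv_nonneg hgd ht₀ hgmax
      have hderivsub : deriv (fun s => u x₀ s - Ψ x₀ s) t₀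
          = deriv (u x₀) t₀ - deriv (Ψ x₀) t₀ := deriv_sub (hut x₀ t₀ ⟨hx₀, ht₀⟩) (hΨt t₀)
      -- assemble
      have hPDE := hpde x₀ t₀ ⟨hx₀, ht₀⟩
      have hΨP := hΨpde x₀ t₀ ⟨hx₀, ht₀⟩
      rw [Lop] at hPDE hΨP
      -- first-order sums agree
      have hb1 : (∑ i, b x₀ t₀ i * fderiv ℝ (fun y => u y t₀) x₀ (EuclideanSpace.single i 1))
          = ∑ i, b x₀ t₀ i * fderiv ℝ (fun y => Ψ y t₀) x₀ (EuclideanSpace.single i 1) := by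
        refine Finset.sum_congr rfl fun i _ => ?_
        rw [hsub1]
      -- second-order sums
      have hA2 : (∑ i, ∑ j, A x₀ t₀ i j *
            fderiv ℝ (fun y => fderiv ℝ (fun w => u w t₀) y (EuclideanSpace.single j 1)) x₀
              (EuclideanSpace.single i 1))
          - (∑ i, ∑ j, A x₀ t₀ i j *
            fderiv ℝ (fun y => fderiv ℝ (fun w => Ψ w t₀) y (EuclideanSpace.single j 1)) x₀
              (EuclideanSpace.single i 1)) ≤ 0 := by
        have heq : (∑ i, ∑ j, A x₀ t₀ i j *
              fderiv ℝ (fun y => fderiv ℝ (fun w => u w t₀) y (EuclideanSpace.single j 1)) x₀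
                (EuclideanSpace.single i 1))
            - (∑ i, ∑ j, A x₀ t₀ i j *
              fderiv ℝ (fun y => fderiv ℝ (fun w => Ψ w t₀) y (EuclideanSpace.single j 1)) x₀
                (EuclideanSpace.single i 1))
            = ∑ i, ∑ j, A x₀ t₀ i j *
              fderiv ℝ (fun y => fderiv ℝ (fun w => u w t₀ - Ψ w t₀) y
                (EuclideanSpace.single j 1)) x₀ (EuclideanSpace.single i 1) := by
          rw [← Finset.sum_sub_distrib]
          refine Finset.sum_congr rfl fun i _ => ?_
          rw [← Finset.sum_sub_distrib]
          refine Finset.sum_congr rfl fun j _ => ?_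
          rw [hsecond j i]
          ring
        rw [heq]
        exact hHess
      have hrM : 0 ≤ r * (u x₀ t₀ - Ψ x₀ t₀) := by
        have : (0:ℝ) < u x₀ t₀ - Ψ x₀ t₀ := hM
        positivity
      have hMeq : v (x₀, t₀) = u x₀ t₀ - Ψ x₀ t₀ := rfl
      rw [hMeq]
      have : βe (u x₀ t₀ - Ψ x₀ t₀) ≤ C₀ := by
        rw [hderivsub] at htd
        linarith [hA2, hb1, htd, hΨP, hPDE, hrM]
      exact le_trans this (le_max_left _ _)
  calc βe (u x t - Ψ x t) = βe (v (x, t)) := rfl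
    _ ≤ βe (v (x₀, t₀)) := hβmono hvle
    _ ≤ max C₀ 0 := hkey
end
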